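/- Let β ∈ (1,2) be the d-Bonacci number and T_B the balanced β-transformation on X_B = [(2-β)/(2β-2), β/(2β-2)). For x ∈ X_B let (t_1, t_2, t_3, ...) be its digit sequence, t_i = D_B(T_B^{i-1} x) ∈ {0,1}. Then x = ∑_{i≥1} t_i β^{-i}, and the digit sequence contains neither 0^{d+1} nor 1^{d+1} as a factor (i.e., no d+1 consecutive equal digits). -/

import Mathlib

/-!
Since `T_B y = β y - D_B y`, induction gives `x - ∑_{k<n} t_{k+1} β^{-(k+1)} = β^{-n} T_B^n x`, and the right side
tends to `0` because `X_B` is `T_B`-invariant and bounded.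

Along a run of `n` equal digits `e` starting at `y`, `T_B^n y = β^n y - e (1 + β + ⋯ + β^{n-1})`, which for `n = d`
is `β^d (y - e)` by the d-Bonacci equation. That equation also says `β^d (2 - β) = 1`, i.e. `β^d` maps the lower end
`(2-β)/(2β-2)` of `X_B` to the threshold `1/(2β-2)`. So `d` zeros from `y ∈ X_B` force `T_B^d y` above the threshold,
and `d` ones force it below, since `y - 1` lies below the lower end of `X_B`.
-/

open Finset Filter Topology

section DigitExpansion

variable {β : ℝ} {T D : ℝ → ℝ}

theorem sub_sum_digits_eq (hβ : β ≠ 0) (hT : ∀ y, T y = β * y - D y) (x : ℝ) (n : ℕ) :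
    x - ∑ k ∈ range n, D (T^[k] x) * (1 / β) ^ (k + 1) = (1 / β) ^ n * T^[n] x := by
  induction n with
  | zero => simp
  | succ n ih =>
    rw [sum_range_succ, Function.iterate_succ_apply', hT, ← sub_sub, ih]
    linear_combination (-(1 / β) ^ n * T^[n] x) * one_div_mul_cancel hβ

theorem hasSum_digits (hβ : 1 < β) (hT : ∀ y, T y = β * y - D y) {s : Set ℝ}
    (hs : Bornology.IsBounded s) (hTs : Set.MapsTo T s s) {x : ℝ} (hx : x ∈ s) :
    HasSum (fun n => D (T^[n] x) * (1 / β) ^ (n + 1)) x := by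
  obtain ⟨C, hC⟩ := isBounded_iff_forall_norm_le.mp hs
  have horbit (n : ℕ) : ‖T^[n] x‖ ≤ C := hC _ (hTs.iterate n hx)
  have hC0 : 0 ≤ C := (norm_nonneg _).trans (horbit 0)
  have hr0 : 0 ≤ 1 / β := by positivity
  have hr1 : 1 / β < 1 := (div_lt_one (by linarith)).2 hβ
  have hsum : Summable fun n => D (T^[n] x) * (1 / β) ^ (n + 1) := by
    refine .of_norm_bounded ((summable_geometric_of_lt_one hr0 hr1).mul_left ((β + 1) * C))
      fun n => ?_
    have hD : D (T^[n] x) = β * T^[n] x - T^[n + 1] x := by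
      rw [Function.iterate_succ_apply', hT]; ring
    have hDC : ‖D (T^[n] x)‖ ≤ (β + 1) * C := by
      calc ‖D (T^[n] x)‖ ≤ ‖β * T^[n] x‖ + ‖T^[n + 1] x‖ := hD ▸ norm_sub_le _ _
        _ ≤ β * C + C := by
          rw [norm_mul, Real.norm_of_nonneg (by linarith)]
          gcongr <;> exact horbit _
        _ = (β + 1) * C := by ring
    calc ‖D (T^[n] x) * (1 / β) ^ (n + 1)‖ = ‖D (T^[n] x)‖ * (1 / β) ^ (n + 1) := by
          rw [norm_mul, norm_pow, Real.norm_of_nonneg hr0]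
      _ ≤ (β + 1) * C * (1 / β) ^ n :=
          mul_le_mul hDC (pow_le_pow_of_le_one hr0 hr1.le n.le_succ) (by positivity) (by positivity)
  rw [hsum.hasSum_iff_tendsto_nat]
  have hrem : Tendsto (fun n => (1 / β) ^ n * T^[n] x) atTop (𝓝 0) :=
    (tendsto_pow_atTop_nhds_zero_of_lt_one hr0 hr1).zero_mul_isBoundedUnder_le
      (isBoundedUnder_of ⟨C, horbit⟩)
  refine (sub_zero x ▸ (tendsto_const_nhds (x := x)).sub hrem).congr fun n => ?_
  rw [← sub_sum_digits_eq (by positivity) hT x n, sub_sub_cancel]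

theorem iterate_eq_of_forall_digit_eq (hT : ∀ y, T y = β * y - D y) {y e : ℝ} {n : ℕ}
    (he : ∀ k < n, D (T^[k] y) = e) : T^[n] y = β ^ n * y - e * ∑ k ∈ range n, β ^ k := by
  induction n with
  | zero => simp
  | succ n ih =>
    rw [Function.iterate_succ_apply', hT, he n n.lt_succ_self, ih fun k hk => he k (by omega),
      geom_sum_succ]
    ring

end DigitExpansion

section Balanced

variable {β : ℝ}

noncomputable def balancedDigit (β x : ℝ) : ℝ := if 1 / (2 * β - 2) ≤ x then 1 else 0

noncomputable def balancedMap (β x : ℝ) : ℝ := β * x - balancedDigit β x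

theorem balancedDigit_of_le {x : ℝ} (h : 1 / (2 * β - 2) ≤ x) : balancedDigit β x = 1 := if_pos h

theorem balancedDigit_of_lt {x : ℝ} (h : x < 1 / (2 * β - 2)) : balancedDigit β x = 0 :=
  if_neg h.not_ge

def balancedDomain (β : ℝ) : Set ℝ := Set.Ico ((2 - β) / (2 * β - 2)) (β / (2 * β - 2))

theorem mapsTo_balancedMap (h1 : 1 < β) (h2 : β ≤ 2) :
    Set.MapsTo (balancedMap β) (balancedDomain β) (balancedDomain β) := by
  rintro y ⟨hyL, hyU⟩
  have ha : 0 < 2 * β - 2 := by linarith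
  rw [div_le_iff₀ ha] at hyL
  rw [lt_div_iff₀ ha] at hyU
  unfold balancedMap balancedDigit balancedDomain
  split_ifs with hc
  · rw [div_le_iff₀ ha] at hc
    constructor
    · rw [div_le_iff₀ ha]; nlinarith
    · rw [lt_div_iff₀ ha]; nlinarith
  · rw [not_le, lt_div_iff₀ ha] at hc
    constructor
    · rw [div_le_iff₀ ha]; nlinarith
    · rw [lt_div_iff₀ ha]; nlinarith

theorem pow_mul_two_sub_eq_one {d : ℕ} (hβ : β ^ d = ∑ i ∈ range d, β ^ i) :
    β ^ d * (2 - β) = 1 := by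
  linear_combination (1 - β) * hβ - geom_sum_mul β d

theorem balancedDigit_iterate_ne_of_run {d : ℕ} (h1 : 1 < β) (hβ : β ^ d = ∑ i ∈ range d, β ^ i)
    {y : ℝ} (hy : y ∈ balancedDomain β)
    (hrun : ∀ k < d, balancedDigit β ((balancedMap β)^[k] y) = balancedDigit β y) :
    balancedDigit β ((balancedMap β)^[d] y) ≠ balancedDigit β y := by
  have hTd := iterate_eq_of_forall_digit_eq (T := balancedMap β) (fun _ => rfl) hrun
  rw [← hβ] at hTd
  have hlow : β ^ d * ((2 - β) / (2 * β - 2)) = 1 / (2 * β - 2) := by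
    rw [mul_div_assoc', pow_mul_two_sub_eq_one hβ]
  have hβd : 0 < β ^ d := pow_pos (by linarith) d
  obtain ⟨hyL, hyU⟩ := hy
  by_cases hc : 1 / (2 * β - 2) ≤ y
  · have hUL : β / (2 * β - 2) - 1 = (2 - β) / (2 * β - 2) := by
      rw [div_sub_one (by linarith)]; ring_nf
    have hbelow : (balancedMap β)^[d] y < 1 / (2 * β - 2) := by
      rw [hTd, balancedDigit_of_le hc, ← hlow, ← hUL]
      nlinarith
    rw [balancedDigit_of_le hc, balancedDigit_of_lt hbelow]
    norm_num
  · have habove : 1 / (2 * β - 2) ≤ (balancedMap β)^[d] y := by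
      rw [hTd, balancedDigit_of_lt (not_le.mp hc), ← hlow]
      nlinarith
    rw [balancedDigit_of_lt (not_le.mp hc), balancedDigit_of_le habove]
    norm_num

end Balanced

theorem balanced_expansion_digits_general (d : ℕ) (β : ℝ) (h1 : 1 < β) (h2 : β < 2)
    (hβ : β ^ d = ∑ i ∈ Finset.range d, β ^ i)
    (TB : ℝ → ℝ) (hTB : ∀ x, TB x = if 1/(2*β - 2) ≤ x then β * x - 1 else β * x)
    (DB : ℝ → ℝ) (hDB : ∀ x, DB x = if 1/(2*β - 2) ≤ x then 1 else 0) :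
    ∀ x ∈ Set.Ico ((2 - β)/(2*β - 2)) (β/(2*β - 2)),
      ∀ t : ℕ → ℝ, (∀ i : ℕ, 1 ≤ i → t i = DB (TB^[i-1] x)) →
        (x = ∑' n : ℕ, t (n + 1) * (1/β) ^ (n + 1)) ∧
        (∀ i : ℕ, 1 ≤ i → ∃ j : ℕ, j ≤ d ∧ t (i + j) ≠ t i) := by
  obtain rfl : DB = balancedDigit β := funext hDB
  obtain rfl : TB = balancedMap β := funext fun y => by
    rw [hTB, balancedMap, balancedDigit]; split_ifs <;> ring
  intro x hx t ht
  have hT := mapsTo_balancedMap h1 h2.le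
  refine ⟨?_, fun i hi => ?_⟩
  · have ht' (n : ℕ) : t (n + 1) = balancedDigit β ((balancedMap β)^[n] x) :=
      ht (n + 1) (Nat.le_add_left 1 n)
    simp_rw [ht']
    exact (hasSum_digits h1 (fun _ => rfl) (Metric.isBounded_Ico _ _) hT hx).tsum_eq.symm
  · by_contra! hrun
    set y := (balancedMap β)^[i - 1] x
    have hdigit (j : ℕ) : t (i + j) = balancedDigit β ((balancedMap β)^[j] y) := by
      rw [ht _ (by omega), ← Function.iterate_add_apply]
      congr 2
      omega
    have hy : t i = balancedDigit β y := hdigit 0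
    refine balancedDigit_iterate_ne_of_run h1 hβ (hT.iterate (i - 1) hx) (fun k hk => ?_) ?_
    · rw [← hdigit, ← hy, hrun k hk.le]
    · rw [← hdigit, ← hy, hrun d le_rfl]

/-- For `x ∈ X_B` with balanced digit sequence `t_i = D_B(T_B^{i-1} x) ∈ {0,1}`, one has
`x = ∑_{i≥1} t_i β^{-i}`, and the digit sequence contains no `d+1` consecutive equal
digits (neither `0^{d+1}` nor `1^{d+1}` as a factor). -/
theorem balanced_expansion_digits (d : ℕ) (hd : 2 ≤ d) (β : ℝ) (h1 : 1 < β) (h2 : β < 2)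
    (hβ : β ^ d = ∑ i ∈ Finset.range d, β ^ i)
    (TB : ℝ → ℝ) (hTB : ∀ x, TB x = if 1/(2*β - 2) ≤ x then β * x - 1 else β * x)
    (DB : ℝ → ℝ) (hDB : ∀ x, DB x = if 1/(2*β - 2) ≤ x then 1 else 0) :
    ∀ x ∈ Set.Ico ((2 - β)/(2*β - 2)) (β/(2*β - 2)),
      ∀ t : ℕ → ℝ, (∀ i : ℕ, 1 ≤ i → t i = DB (TB^[i-1] x)) →
        (x = ∑' n : ℕ, t (n + 1) * (1/β) ^ (n + 1)) ∧
        (∀ i : ℕ, 1 ≤ i → ∃ j : ℕ, j ≤ d ∧ t (i + j) ≠ t i) :=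
  balanced_expansion_digits_general d β h1 h2 hβ TB hTB DB hDB
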